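/- Let (R,𝔪) be a Noetherian local ring, J ⊆ I ideals of R, and R̂ the 𝔪-adic completion. Then 𝔞(I,J)·R̂ ⊆ 𝔞(I·R̂, J·R̂), where 𝔞(H,K) denotes the coefficient ideal of H relative to K, i.e., the largest ideal 𝔠 with H𝔠 = K𝔠. -/
import Mathlib

open IsLocalRing

/-- The coefficient ideal of `I` relative to `J`. -/
def coeffIdeal {R : Type*} [CommRing R] (I J : Ideal R) : Ideal R :=
  sSup {b : Ideal R | I * b = J * b}

theorem mul_coeffIdeal {R : Type*} [CommRing R] (I J : Ideal R) :
    I * coeffIdeal I J = J * coeffIdeal I J := by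
  rw [coeffIdeal, sSup_eq_iSup']
  calc I * ⨆ (b : {b : Ideal R | I * b = J * b}), (b : Ideal R)
      = ⨆ (b : {b : Ideal R | I * b = J * b}), I * (b : Ideal R) := by
        simpa only [Ideal.smul_eq_mul] using
          (Submodule.smul_iSup (I := I) (t := fun b : {b : Ideal R | I * b = J * b} => (b : Ideal R)))
    _ = ⨆ (b : {b : Ideal R | I * b = J * b}), J * (b : Ideal R) := by
        refine iSup_congr fun b => b.2
    _ = J * ⨆ (b : {b : Ideal R | I * b = J * b}), (b : Ideal R) := by
        simpa only [Ideal.smul_eq_mul] using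
          (Submodule.smul_iSup (I := J) (t := fun b : {b : Ideal R | I * b = J * b} => (b : Ideal R))).symm

/-- The coefficient ideal extends into the coefficient ideal after completion:
`𝔞(I,J)·R̂ ⊆ 𝔞(IR̂, JR̂)`. -/
theorem coeffIdeal_map_completion_le {R : Type*} [CommRing R] [IsLocalRing R]
    [IsNoetherianRing R] (I J : Ideal R) (hJI : J ≤ I) :
    Ideal.map (algebraMap R (AdicCompletion (maximalIdeal R) R)) (coeffIdeal I J) ≤
      coeffIdeal (Ideal.map (algebraMap R (AdicCompletion (maximalIdeal R) R)) I)
        (Ideal.map (algebraMap R (AdicCompletion (maximalIdeal R) R)) J) := by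
  apply le_sSup
  show _ * _ = _ * _
  rw [← Ideal.map_mul, ← Ideal.map_mul, mul_coeffIdeal]
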